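/- (A^R_2 is generated by 1₁*1₁ and z₁*1₁.) For every (d1, d2) ∈ ℤ², there exist Laurent polynomials a, b ∈ R[z1^{±1}, z2^{±1}], each symmetric under exchanging z1 and z2, such that Sh_2(d1, d2) = a · Sh_2(0, 0) + b · Sh_2(1, 0). -/

import Mathlib

open MvPolynomial Finset

noncomputable section

/-- `Fk k` is the field `F_k = ℂ(q1, q2, z1, …, zk)`, realized as the fraction field of the
polynomial ring `ℂ[q1, q2, z1, …, zk]`. -/
abbrev Fk (k : ℕ) : Type := FractionRing (MvPolynomial (Fin 2 ⊕ Fin k) ℂ)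

/-- The indeterminate `q1` in `F_k`. -/
def q1F (k : ℕ) : Fk k := algebraMap (MvPolynomial (Fin 2 ⊕ Fin k) ℂ) (Fk k) (X (Sum.inl 0))

/-- The indeterminate `q2` in `F_k`. -/
def q2F (k : ℕ) : Fk k := algebraMap (MvPolynomial (Fin 2 ⊕ Fin k) ℂ) (Fk k) (X (Sum.inl 1))

/-- The indeterminates `z1, …, zk` in `F_k` (zero-indexed: `zF k i` is `z_{i+1}`). -/
def zF (k : ℕ) (i : Fin k) : Fk k := algebraMap (MvPolynomial (Fin 2 ⊕ Fin k) ℂ) (Fk k) (X (Sum.inr i))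

/-- `ω(x, y) = (x − q·y)(y − q1·x)(y − q2·x)/(x − y)`, where `q = q1·q2`. -/
def omegaF {K : Type*} [Field K] (q1 q2 x y : K) : K :=
  (x - q1 * q2 * y) * (y - q1 * x) * (y - q2 * x) / (x - y)

/-- The monomial shuffle element
`Sh_k(d) = Σ_{σ ∈ S_k} ∏_{i=1}^k z_{σ(i)}^{d_i} · ∏_{1 ≤ i < j ≤ k} ω(z_{σ(i)}, z_{σ(j)})`,
as a rational expression in the values `z : Fin k → K`. -/
def Sh {K : Type*} [Field K] (q1 q2 : K) {k : ℕ} (z : Fin k → K) (d : Fin k → ℤ) : K :=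
  ∑ σ : Equiv.Perm (Fin k), (∏ i, z (σ i) ^ d i) *
    ∏ p ∈ Finset.univ.filter (fun p : Fin k × Fin k => p.1 < p.2),
      omegaF q1 q2 (z (σ p.1)) (z (σ p.2))

/-- The Laurent polynomial subring `R[z1^{±1}, …, zk^{±1}]` of `K`, where
`R = ℂ[q1^{±1}, q2^{±1}]`: the subring generated by the complex constants,
`q1^{±1}`, `q2^{±1}` and the `z_i^{±1}`. -/
def laurentSubring {K : Type*} [Field K] [Algebra ℂ K] (q1 q2 : K) {k : ℕ} (z : Fin k → K) :
    Subring K :=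
  Subring.closure ((Set.range fun c : ℂ => algebraMap ℂ K c) ∪ {q1, q1⁻¹, q2, q2⁻¹} ∪
    Set.range z ∪ Set.range fun i => (z i)⁻¹)

/-- The `ℂ(q1,q2)`-algebra automorphism of `F_k` fixing `q1, q2` and sending `z_i ↦ z_{τ(i)}`. -/
def permAut (k : ℕ) (τ : Equiv.Perm (Fin k)) : Fk k ≃+* Fk k :=
  IsFractionRing.ringEquivOfRingEquiv
    (MvPolynomial.renameEquiv ℂ (Equiv.sumCongr (Equiv.refl (Fin 2)) τ)).toRingEquiv

/-! The interpolation idea: `Sh_2(d) = m(z₁,z₂) ω(z₁,z₂) + m(z₂,z₁) ω(z₂,z₁)` with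
`m = z₁^{d₁} z₂^{d₂}`, while `a·Sh_2(0,0) + b·Sh_2(1,0) = (a + b z₁) ω(z₁,z₂) + (a + b z₂) ω(z₂,z₁)`
for symmetric `a, b`. So it suffices to solve `a + b z₁ = m(z₁,z₂)`, `a + b z₂ = m(z₂,z₁)`, i.e.
`b = (m(z₁,z₂) − m(z₂,z₁))/(z₁ − z₂)` and `a = m(z₁,z₂) − b z₁`. Writing `n = d₁ − d₂`,
`b = (z₁z₂)^{d₂} (z₁^n − z₂^n)/(z₁ − z₂)`, and this divided difference is a symmetric Laurent
polynomial (a geometric sum, times `−(z₁z₂)^n` when `n < 0`). -/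

section DivDiff

variable {K : Type*} [Field K]

/-- `(x ^ n - y ^ n) / (x - y)` for `n : ℤ`, written as a Laurent polynomial in `x` and `y`. -/
def zpowDivDiff (x y : K) : ℤ → K
  | Int.ofNat n => ∑ i ∈ range n, x ^ i * y ^ (n - 1 - i)
  | Int.negSucc m => -(x⁻¹ * y⁻¹) ^ (m + 1) * ∑ i ∈ range (m + 1), x ^ i * y ^ (m + 1 - 1 - i)

theorem zpowDivDiff_mul_sub {x y : K} (hx : x ≠ 0) (hy : y ≠ 0) (n : ℤ) :
    zpowDivDiff x y n * (x - y) = x ^ n - y ^ n := by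
  cases n with
  | ofNat n => simpa [zpowDivDiff] using geom_sum₂_mul x y n
  | negSucc m =>
    rw [zpowDivDiff, mul_assoc, geom_sum₂_mul, zpow_negSucc, zpow_negSucc, mul_pow, inv_pow,
      inv_pow]
    field_simp
    ring

theorem zpowDivDiff_comm (x y : K) (n : ℤ) : zpowDivDiff y x n = zpowDivDiff x y n := by
  cases n <;> simp only [zpowDivDiff, geom_sum₂_comm y x, mul_comm y⁻¹]

theorem map_zpowDivDiff {L F : Type*} [Field L] [FunLike F K L] [RingHomClass F K L] (ψ : F)
    (x y : K) (n : ℤ) : ψ (zpowDivDiff x y n) = zpowDivDiff (ψ x) (ψ y) n := by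
  cases n <;> simp [zpowDivDiff]

theorem zpowDivDiff_mem {S : Subring K} {x y : K} (hx : x ∈ S) (hx' : x⁻¹ ∈ S) (hy : y ∈ S)
    (hy' : y⁻¹ ∈ S) (n : ℤ) : zpowDivDiff x y n ∈ S := by
  have hsum (k : ℕ) : ∑ i ∈ range k, x ^ i * y ^ (k - 1 - i) ∈ S :=
    sum_mem fun i _ => mul_mem (pow_mem hx i) (pow_mem hy _)
  cases n with
  | ofNat n => exact hsum n
  | negSucc m => exact mul_mem (neg_mem (pow_mem (mul_mem hx' hy') _)) (hsum (m + 1))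

end DivDiff

theorem zpow_mem_of_inv_mem {K : Type*} [DivisionRing K] {S : Subring K} {x : K} (hx : x ∈ S)
    (hx' : x⁻¹ ∈ S) (d : ℤ) : x ^ d ∈ S := by
  obtain ⟨n, rfl | rfl⟩ := d.eq_nat_or_neg
  · simpa using pow_mem hx n
  · simpa using pow_mem hx' n

theorem Sh_two {K : Type*} [Field K] (q1 q2 : K) (z : Fin 2 → K) (d : Fin 2 → ℤ) :
    Sh q1 q2 z d = z 0 ^ d 0 * z 1 ^ d 1 * omegaF q1 q2 (z 0) (z 1)
      + z 1 ^ d 0 * z 0 ^ d 1 * omegaF q1 q2 (z 1) (z 0) := by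
  have huniv : (univ : Finset (Equiv.Perm (Fin 2))) = {1, Equiv.swap 0 1} := by decide
  have hpairs : univ.filter (fun p : Fin 2 × Fin 2 => p.1 < p.2) = {(0, 1)} := by decide
  rw [Sh, huniv, hpairs, sum_pair (by decide)]
  simp [Fin.prod_univ_two]

theorem Sh_two_eq_of_interpolates {K : Type*} [Field K] (q1 q2 : K) (z : Fin 2 → K)
    (d1 d2 : ℤ) {a b : K} (h0 : a + b * z 0 = z 0 ^ d1 * z 1 ^ d2)
    (h1 : a + b * z 1 = z 1 ^ d1 * z 0 ^ d2) :
    Sh q1 q2 z ![d1, d2] = a * Sh q1 q2 z ![0, 0] + b * Sh q1 q2 z ![1, 0] := by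
  simp only [Sh_two, Matrix.cons_val_zero, Matrix.cons_val_one, zpow_zero, zpow_one, one_mul,
    mul_one]
  rw [← h0, ← h1]
  ring

theorem exists_symmetric_interpolation {K F : Type*} [Field K] [FunLike F K K]
    [RingHomClass F K K] {w1 w2 : K} (hw1 : w1 ≠ 0) (hw2 : w2 ≠ 0) {S : Subring K}
    (hS1 : w1 ∈ S) (hS1' : w1⁻¹ ∈ S) (hS2 : w2 ∈ S) (hS2' : w2⁻¹ ∈ S) {φ : F}
    (hφ1 : φ w1 = w2) (hφ2 : φ w2 = w1) (d1 d2 : ℤ) :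
    ∃ a b, a ∈ S ∧ b ∈ S ∧ φ a = a ∧ φ b = b ∧
      a + b * w1 = w1 ^ d1 * w2 ^ d2 ∧ a + b * w2 = w2 ^ d1 * w1 ^ d2 := by
  set b := (w1 * w2) ^ d2 * zpowDivDiff w1 w2 (d1 - d2)
  have hb : b * (w1 - w2) = w1 ^ d1 * w2 ^ d2 - w2 ^ d1 * w1 ^ d2 := by
    rw [mul_assoc, zpowDivDiff_mul_sub hw1 hw2, mul_zpow, zpow_sub₀ hw1, zpow_sub₀ hw2]
    field_simp
  have hφb : φ b = b := by
    simp only [b, map_mul, map_zpow₀, map_zpowDivDiff, hφ1, hφ2, zpowDivDiff_comm, mul_comm w2]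
  have hbS : b ∈ S := by
    refine mul_mem ?_ (zpowDivDiff_mem hS1 hS1' hS2 hS2' _)
    rw [mul_zpow]
    exact mul_mem (zpow_mem_of_inv_mem hS1 hS1' d2) (zpow_mem_of_inv_mem hS2 hS2' d2)
  refine ⟨w1 ^ d1 * w2 ^ d2 - b * w1, b, ?_, hbS, ?_, hφb, by ring, by linear_combination -hb⟩
  · exact sub_mem (mul_mem (zpow_mem_of_inv_mem hS1 hS1' d1) (zpow_mem_of_inv_mem hS2 hS2' d2))
      (mul_mem hbS hS1)
  · rw [map_sub, map_mul, map_mul, map_zpow₀, map_zpow₀, hφb, hφ1, hφ2]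
    linear_combination hb

theorem mem_laurentSubring {K : Type*} [Field K] [Algebra ℂ K] (q1 q2 : K) {k : ℕ}
    (z : Fin k → K) (i : Fin k) : z i ∈ laurentSubring q1 q2 z :=
  Subring.subset_closure (.inl (.inr ⟨i, rfl⟩))

theorem inv_mem_laurentSubring {K : Type*} [Field K] [Algebra ℂ K] (q1 q2 : K) {k : ℕ}
    (z : Fin k → K) (i : Fin k) : (z i)⁻¹ ∈ laurentSubring q1 q2 z :=
  Subring.subset_closure (.inr ⟨i, rfl⟩)

theorem zF_ne_zero (k : ℕ) (i : Fin k) : zF k i ≠ 0 := by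
  simp [zF, X_ne_zero]

theorem permAut_zF (k : ℕ) (τ : Equiv.Perm (Fin k)) (i : Fin k) :
    permAut k τ (zF k i) = zF k (τ i) := by
  simp [permAut, zF]

/-- `A^R_2` is generated by `1₁*1₁ = Sh_2(0,0)` and `z₁*1₁ = Sh_2(1,0)`: for every
`(d1, d2) ∈ ℤ²` there are Laurent polynomials `a, b ∈ R[z1^{±1}, z2^{±1}]`, each symmetric
under exchanging `z1` and `z2`, with `Sh_2(d1, d2) = a·Sh_2(0,0) + b·Sh_2(1,0)`. -/
theorem AR2_generated_by_two (d1 d2 : ℤ) :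
    ∃ a b : Fk 2,
      a ∈ laurentSubring (q1F 2) (q2F 2) (zF 2) ∧
      b ∈ laurentSubring (q1F 2) (q2F 2) (zF 2) ∧
      permAut 2 (Equiv.swap 0 1) a = a ∧
      permAut 2 (Equiv.swap 0 1) b = b ∧
      Sh (q1F 2) (q2F 2) (zF 2) ![d1, d2] =
        a * Sh (q1F 2) (q2F 2) (zF 2) ![0, 0] + b * Sh (q1F 2) (q2F 2) (zF 2) ![1, 0] := by
  obtain ⟨a, b, ha, hb, hφa, hφb, h0, h1⟩ :=
    exists_symmetric_interpolation (zF_ne_zero 2 0) (zF_ne_zero 2 1)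
      (mem_laurentSubring _ _ _ 0) (inv_mem_laurentSubring _ _ _ 0)
      (mem_laurentSubring _ _ _ 1) (inv_mem_laurentSubring _ _ _ 1)
      (φ := permAut 2 (Equiv.swap 0 1)) (permAut_zF 2 _ 0) (permAut_zF 2 _ 1) d1 d2
  exact ⟨a, b, ha, hb, hφa, hφb, Sh_two_eq_of_interpolates _ _ _ d1 d2 h0 h1⟩
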